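/- Let r ≥ 1 and consider the integers R₀ = (3^r - 1)/2 · 3 (ternary representation: r ones followed by a zero) and R₂ = (3^r - 1)/2 · 3 + 2 (ternary: r ones followed by a two). Then wt(R₀) - wt(2R₀) = -r and wt(R₂) - wt(2R₂) = r, where wt is the ternary digit sum (no modular reduction needed, assuming 2R₂ < 3^n so digits are taken of the integers themselves). -/

import Mathlib

/-! All four numbers have explicit base-3 expansions: `R₀ = 11…10`, `2R₀ = 22…20`,
`R₂ = 11…12` and `2R₂ = 3^(r+1) + 1 = 100…01`, with digit sums `r`, `2r`, `r + 2` and `2`. -/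

/-- `wt k` is the sum of the base-3 digits of the natural number `k`. -/
def wt (k : ℕ) : ℕ := (Nat.digits 3 k).sum

namespace Nat

theorem digits_sum_add_base_mul {b x : ℕ} (hb : 1 < b) (hx : x < b) (y : ℕ) :
    (digits b (x + b * y)).sum = x + (digits b y).sum := by
  by_cases h : x ≠ 0 ∨ y ≠ 0
  · rw [digits_add b hb x y hx h, List.sum_cons]
  · obtain ⟨rfl, rfl⟩ : x = 0 ∧ y = 0 := by simpa only [not_or, not_not] using h
    simp

theorem digits_sum_ofDigits {b : ℕ} (hb : 1 < b) (L : List ℕ) (hL : ∀ l ∈ L, l < b) :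
    (digits b (ofDigits b L)).sum = L.sum := by
  induction L with
  | nil => simp
  | cons d L ih =>
    rw [ofDigits_cons, digits_sum_add_base_mul hb (hL d List.mem_cons_self), List.sum_cons,
      ih fun l hl => hL l (List.mem_cons_of_mem d hl)]

theorem ofDigits_replicate {b : ℕ} (hb : 0 < b) (d k : ℕ) :
    (b - 1) * ofDigits b (List.replicate k d) + d = d * b ^ k := by
  induction k with
  | zero => simp
  | succ k ih =>
    obtain ⟨c, rfl⟩ := exists_add_one_eq.mpr hb
    rw [List.replicate_succ, ofDigits_cons, pow_succ]
    simp only [add_tsub_cancel_right] at ih ⊢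
    linear_combination (c + 1) * ih

end Nat

theorem wt_ofDigits (L : List ℕ) (hL : ∀ l ∈ L, l < 3) : wt (Nat.ofDigits 3 L) = L.sum :=
  Nat.digits_sum_ofDigits (by norm_num) L hL

theorem stmt_15_general (r : ℕ) :
    (wt (3 * ((3 ^ r - 1) / 2)) : ℤ) - wt (2 * (3 * ((3 ^ r - 1) / 2))) = -(r : ℤ) ∧
    (wt (3 * ((3 ^ r - 1) / 2) + 2) : ℤ) - wt (2 * (3 * ((3 ^ r - 1) / 2) + 2)) = r := by
  have hones := Nat.ofDigits_replicate (b := 3) (by norm_num) 1 r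
  have htwos := Nat.ofDigits_replicate (b := 3) (by norm_num) 2 r
  have hR₀ : wt (3 * ((3 ^ r - 1) / 2)) = r := by
    have : 3 * ((3 ^ r - 1) / 2) = Nat.ofDigits 3 (0 :: List.replicate r 1) := by
      rw [Nat.ofDigits_cons]; omega
    rw [this, wt_ofDigits _ (by simp)]
    simp
  have h2R₀ : wt (2 * (3 * ((3 ^ r - 1) / 2))) = 2 * r := by
    have : 2 * (3 * ((3 ^ r - 1) / 2)) = Nat.ofDigits 3 (0 :: List.replicate r 2) := by
      rw [Nat.ofDigits_cons]; omega
    rw [this, wt_ofDigits _ (by simp)]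
    simp [mul_comm]
  have hR₂ : wt (3 * ((3 ^ r - 1) / 2) + 2) = r + 2 := by
    have : 3 * ((3 ^ r - 1) / 2) + 2 = Nat.ofDigits 3 (2 :: List.replicate r 1) := by
      rw [Nat.ofDigits_cons]; omega
    rw [this, wt_ofDigits _ (by simp)]
    simp [add_comm]
  have h2R₂ : wt (2 * (3 * ((3 ^ r - 1) / 2) + 2)) = 2 := by
    have : 2 * (3 * ((3 ^ r - 1) / 2) + 2) =
        Nat.ofDigits 3 (1 :: (List.replicate r 0 ++ [1])) := by
      simp only [Nat.ofDigits_cons, Nat.ofDigits_append, Nat.ofDigits_replicate_zero,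
        List.length_replicate, Nat.ofDigits_nil]
      omega
    rw [this, wt_ofDigits _ (by simp; omega)]
    simp
  rw [hR₀, h2R₀, hR₂, h2R₂]
  constructor <;> push_cast <;> ring

theorem stmt_15 (r : ℕ) (hr : 1 ≤ r) :
    (wt (3 * ((3 ^ r - 1) / 2)) : ℤ) - wt (2 * (3 * ((3 ^ r - 1) / 2))) = -(r : ℤ) ∧
    (wt (3 * ((3 ^ r - 1) / 2) + 2) : ℤ) - wt (2 * (3 * ((3 ^ r - 1) / 2) + 2)) = r :=
  stmt_15_general r
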